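/- Let T be a tree containing a strong support vertex v, let U be the set of leaves of T adjacent to v, let π be a pc-partition of T of maximum order PC(T), and let S be a part of π containing all support vertices of T. Then S ∩ U = ∅. -/

import Mathlib

namespace PCPaper

variable {V : Type*}

/-- `S` is a dominating set of `G`. -/
def IsDomSet (G : SimpleGraph V) (S : Set V) : Prop :=
  ∀ v : V, v ∈ S ∨ ∃ u ∈ S, G.Adj u v

/-- `S` is a paired dominating set of `G`: a dominating set such that the subgraph of `G`
induced by `S` contains a perfect matching (a matching whose vertex set is exactly `S`). -/
def IsPairedDomSet (G : SimpleGraph V) (S : Set V) : Prop :=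
  IsDomSet G S ∧ ∃ M : G.Subgraph, M.verts = S ∧ M.IsMatching

/-- Disjoint sets `A`, `B`, neither a paired dominating set, whose union is one. -/
def PairedCoalition (G : SimpleGraph V) (A B : Set V) : Prop :=
  Disjoint A B ∧ ¬ IsPairedDomSet G A ∧ ¬ IsPairedDomSet G B ∧ IsPairedDomSet G (A ∪ B)

variable [Fintype V] [DecidableEq V]

/-- `π` is a paired coalition partition of `G`: no part is a paired dominating set and every
part forms a paired coalition with some other part. -/
def IsPCPartition (G : SimpleGraph V) (π : Finpartition (Finset.univ : Finset V)) : Prop :=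
  ∀ A ∈ π.parts, ¬ IsPairedDomSet G (A : Set V) ∧
    ∃ B ∈ π.parts, B ≠ A ∧ PairedCoalition G (A : Set V) (B : Set V)

/-- The paired coalition number: the maximum number of parts of a pc-partition of `G`,
and `0` if `G` admits no pc-partition. -/
noncomputable def pcNumber (G : SimpleGraph V) : ℕ :=
  sSup {k | ∃ π : Finpartition (Finset.univ : Finset V), IsPCPartition G π ∧ π.parts.card = k}

/-- The paired coalition graph of a partition `π` of `G`: vertices are the parts of `π`,
two parts being adjacent iff they form a paired coalition in `G`. -/
def PCG (G : SimpleGraph V) (π : Finpartition (Finset.univ : Finset V)) :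
    SimpleGraph {A : Finset V // A ∈ π.parts} where
  Adj A B := PairedCoalition G ((A : Finset V) : Set V) ((B : Finset V) : Set V)
  symm := by
    refine ⟨?_⟩
    rintro A B ⟨h1, h2, h3, h4⟩
    exact ⟨h1.symm, h3, h2, by rwa [Set.union_comm]⟩
  loopless := by
    refine ⟨?_⟩
    rintro A ⟨h1, h2, h3, h4⟩
    exact h2 (by rwa [Set.union_self] at h4)

end PCPaper

/-!
In a perfect matching of a paired dominating set a leaf can only be matched to its support
vertex, so no paired dominating set contains two leaves at the same vertex. On the other hand,
every vertex lies in a paired dominating union `C ∪ B` of two parts of `π`. Choose one through a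
leaf `w` at `v`: it contains `v`, the partner of `w`, hence the whole part `S ∋ v`, and hence any
other leaf at `v` lying in `S`.
-/

namespace SimpleGraph.Subgraph

variable {V : Type*} {G : SimpleGraph V} {M : G.Subgraph} {u v w : V}

lemma IsMatching.adj_of_degree_eq_one [Fintype (G.neighborSet u)] (hM : M.IsMatching)
    (hu : u ∈ M.verts) (hvu : G.Adj v u) (hu1 : G.degree u = 1) : M.Adj u v := by
  obtain ⟨x, hx, -⟩ := hM hu
  obtain ⟨y, -, hy⟩ := SimpleGraph.degree_eq_one_iff_existsUnique_adj.mp hu1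
  rwa [hy v hvu.symm, ← hy x (M.adj_sub hx)]

lemma IsMatching.eq_of_degree_eq_one [Fintype (G.neighborSet u)] [Fintype (G.neighborSet w)]
    (hM : M.IsMatching) (hu : u ∈ M.verts) (hw : w ∈ M.verts) (hvu : G.Adj v u)
    (hvw : G.Adj v w) (hu1 : G.degree u = 1) (hw1 : G.degree w = 1) : u = w :=
  hM.eq_of_adj_right (hM.adj_of_degree_eq_one hu hvu hu1) (hM.adj_of_degree_eq_one hw hvw hw1)

end SimpleGraph.Subgraph

namespace Finpartition

variable {α : Type*} [DecidableEq α] {s : Finset α} {P : Finpartition s}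

lemma subset_union_of_mem_parts {S C B : Finset α} (hS : S ∈ P.parts) (hC : C ∈ P.parts)
    (hB : B ∈ P.parts) {a : α} (haS : a ∈ S) (ha : a ∈ (C : Set α) ∪ B) :
    (S : Set α) ⊆ C ∪ B := by
  rcases ha with haC | haB
  · rw [P.eq_of_mem_parts hS hC haS haC]
    exact Set.subset_union_left
  · rw [P.eq_of_mem_parts hS hB haS haB]
    exact Set.subset_union_right

end Finpartition

namespace PCPaper

variable {V : Type*} [Fintype V] [DecidableEq V] {G : SimpleGraph V}
  {π : Finpartition (Finset.univ : Finset V)}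

lemma IsPCPartition.exists_isPairedDomSet_union (hπ : IsPCPartition G π) (x : V) :
    ∃ C ∈ π.parts, ∃ B ∈ π.parts, x ∈ C ∧ IsPairedDomSet G ((C : Set V) ∪ B) := by
  obtain ⟨C, hC, hxC⟩ := π.exists_mem (Finset.mem_univ x)
  obtain ⟨-, B, hB, -, -, -, -, hCB⟩ := hπ C hC
  exact ⟨C, hC, B, hB, hxC, hCB⟩

end PCPaper

open PCPaper Finset in
theorem stmt_10_general {V : Type*} [Fintype V] [DecidableEq V] (T : SimpleGraph V)
    [DecidableRel T.Adj] (v : V)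
    (hv : 2 ≤ (univ.filter fun u => T.Adj v u ∧ T.degree u = 1).card)
    (π : Finpartition (univ : Finset V)) (hπ : IsPCPartition T π)
    (S : Finset V) (hS : S ∈ π.parts)
    (hsupp : ∀ w : V, (∃ u, T.Adj w u ∧ T.degree u = 1) → w ∈ S) :
    ∀ u : V, T.Adj v u → T.degree u = 1 → u ∉ S := by
  intro u hvu hu1 huS
  obtain ⟨w, hw, hwu⟩ := exists_mem_ne hv u
  obtain ⟨hvw, hw1⟩ := (mem_filter.mp hw).2
  obtain ⟨C, hC, B, hB, hwC, -, M, hMverts, hM⟩ := hπ.exists_isPairedDomSet_union w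
  have hwM : w ∈ M.verts := hMverts ▸ Or.inl hwC
  have hvM : v ∈ M.verts := (hM.adj_of_degree_eq_one hwM hvw hw1).snd_mem
  have hSM : (S : Set V) ⊆ M.verts :=
    hMverts ▸ π.subset_union_of_mem_parts hS hC hB (hsupp v ⟨u, hvu, hu1⟩) (hMverts ▸ hvM)
  exact hwu (hM.eq_of_degree_eq_one hwM (hSM huS) hvw hvu hw1 hu1)

open PCPaper Finset in
/-- If `v` is a strong support vertex of a tree `T`, `π` a maximum pc-partition of `T`
and `S ∈ π` contains all support vertices, then `S` contains no leaf adjacent to `v`. -/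
theorem stmt_10 {V : Type*} [Fintype V] [DecidableEq V] (T : SimpleGraph V)
    [DecidableRel T.Adj] (hT : T.IsTree) (v : V)
    (hv : 2 ≤ (univ.filter fun u => T.Adj v u ∧ T.degree u = 1).card)
    (π : Finpartition (univ : Finset V)) (hπ : IsPCPartition T π)
    (hmax : π.parts.card = pcNumber T)
    (S : Finset V) (hS : S ∈ π.parts)
    (hsupp : ∀ w : V, (∃ u, T.Adj w u ∧ T.degree u = 1) → w ∈ S) :
    ∀ u : V, T.Adj v u → T.degree u = 1 → u ∉ S :=
  stmt_10_general T v hv π hπ S hS hsupp
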